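/- arXiv:2210.00229 — 4 statements merged into one kernel-verified Lean document; each statement's English description precedes it below -/
import Mathlib

section
/- Let s = a + bi be a complex number with a > 0, and let σ ≥ 0, α ≥ 0 be real. Then the real part of s̃ = s(1 + σ/(α + s)) satisfies Re(s̃) ≥ a > 0. -/
/-!
Write `s̃ = s + σ · s / (α + s)`. Multiplying numerator and denominator by `conj (α + s)`,
`Re (s / (α + s)) = (Re s · (α + Re s) + (Im s)²) / |α + s|² ≥ 0`, so `Re s̃ ≥ Re s`.
-/

open Complex

/-- Also holds when `α + s = 0`, where the quotient is the junk value `0`. -/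
theorem re_div_ofReal_add_nonneg {s : ℂ} {α : ℝ} (hs : 0 ≤ s.re) (hα : 0 ≤ α) :
    0 ≤ (s / (α + s)).re := by
  rw [div_re, add_re, add_im, ofReal_re, ofReal_im, zero_add]
  have hre : 0 ≤ s.re * (α + s.re) := mul_nonneg hs (by linarith)
  exact add_nonneg (div_nonneg hre (normSq_nonneg _))
    (div_nonneg (mul_self_nonneg _) (normSq_nonneg _))

theorem pml_shift_re_ge (s : ℂ) (σ α : ℝ) (ha : 0 < s.re) (hσ : 0 ≤ σ) (hα : 0 ≤ α) :
    s.re ≤ (s * (1 + (σ : ℂ) / ((α : ℂ) + s))).re ∧ 0 < s.re := by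
  refine ⟨?_, ha⟩
  have hsplit : s * (1 + (σ : ℂ) / (α + s)) = s + σ * (s / (α + s)) := by ring
  rw [hsplit, add_re, re_ofReal_mul]
  exact le_add_of_nonneg_right (mul_nonneg hσ (re_div_ofReal_add_nonneg ha.le hα))
end

section
/- Suppose F : ℂ × ℂ → ℂ is homogeneous of degree n, i.e. F(c·s, c·k) = cⁿ·F(s,k) for all nonzero c ∈ ℂ. If F(s,k) ≠ 0 for all s with Re(s) > 0 and all real k, then for any σ ≥ 0, α ≥ 0 the function s ↦ F(s, k/S_x(s)) has no zero s with Re(s) > 0, where S_x(s) = 1 + σ/(α+s). -/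
/-!
Homogeneity gives `F(s, k / S) = S⁻ⁿ F(s S, k)` for the PML metric `S = 1 + σ / (α + s)`.
For `Re s > 0` both `σ / (α + s)` and `s / (α + s)` lie in the closed right half-plane, so
`S ≠ 0` and `Re (s S) = Re s + σ Re (s / (α + s)) ≥ Re s > 0`: a zero of the stretched
determinant would be a zero of `F` at a point `s S` of the right half-plane with real `k`.
-/

namespace Complex

theorem re_ofReal_div_nonneg {r : ℝ} {w : ℂ} (hr : 0 ≤ r) (hw : 0 ≤ w.re) :
    0 ≤ ((r : ℂ) / w).re := by
  rw [div_eq_mul_inv, re_ofReal_mul, inv_re]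
  exact mul_nonneg hr (div_nonneg hw (normSq_nonneg w))

theorem re_div_ofReal_add_self_nonneg {α : ℝ} {s : ℂ} (hα : 0 ≤ α) (hs : 0 ≤ s.re) :
    0 ≤ (s / (α + s)).re := by
  have hnum : 0 ≤ s.re * (α + s).re + s.im * (α + s).im := by
    simp only [add_re, add_im, ofReal_re, ofReal_im, zero_add]
    nlinarith [mul_self_nonneg s.im]
  rw [div_re, ← add_div]
  exact div_nonneg hnum (normSq_nonneg _)

end Complex

/-- The PML complex metric `S_x`. -/
noncomputable def pmlMetric (σ α : ℝ) (s : ℂ) : ℂ := 1 + (σ : ℂ) / ((α : ℂ) + s)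

section pmlMetric

variable {σ α : ℝ} {s : ℂ}

theorem one_le_re_pmlMetric (hσ : 0 ≤ σ) (hα : 0 ≤ α) (hs : 0 ≤ s.re) :
    1 ≤ (pmlMetric σ α s).re := by
  have hw : 0 ≤ ((α : ℂ) + s).re := by simpa using add_nonneg hα hs
  simpa [pmlMetric] using Complex.re_ofReal_div_nonneg hσ hw

theorem pmlMetric_ne_zero (hσ : 0 ≤ σ) (hα : 0 ≤ α) (hs : 0 ≤ s.re) : pmlMetric σ α s ≠ 0 :=
  fun h => (one_le_re_pmlMetric hσ hα hs).not_gt (by simp [h])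

theorem re_le_re_mul_pmlMetric (hσ : 0 ≤ σ) (hα : 0 ≤ α) (hs : 0 ≤ s.re) :
    s.re ≤ (s * pmlMetric σ α s).re := by
  have hsplit : s * pmlMetric σ α s = s + σ * (s / (α + s)) := by
    rw [pmlMetric]; ring
  rw [hsplit, Complex.add_re, Complex.re_ofReal_mul]
  exact le_add_of_nonneg_right
    (mul_nonneg hσ (Complex.re_div_ofReal_add_self_nonneg hα hs))

end pmlMetric

theorem apply_div_eq_of_homogeneous {K : Type*} [Field K] {F : K → K → K} {n : ℤ}
    (hhom : ∀ c : K, c ≠ 0 → ∀ s k : K, F (c * s) (c * k) = c ^ n * F s k)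
    {S : K} (hS : S ≠ 0) (s k : K) :
    F s (k / S) = S⁻¹ ^ n * F (s * S) k := by
  rw [← hhom S⁻¹ (inv_ne_zero hS), mul_comm s S, inv_mul_cancel_left₀ hS, inv_mul_eq_div]

theorem pml_no_unstable_roots (F : ℂ → ℂ → ℂ) (n : ℤ)
    (hhom : ∀ c : ℂ, c ≠ 0 → ∀ s k : ℂ, F (c * s) (c * k) = c ^ n * F s k)
    (hF : ∀ s : ℂ, 0 < s.re → ∀ k : ℝ, F s (k : ℂ) ≠ 0)
    (σ α : ℝ) (hσ : 0 ≤ σ) (hα : 0 ≤ α) :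
    ∀ s : ℂ, 0 < s.re → ∀ k : ℝ,
      F s ((k : ℂ) / (1 + (σ : ℂ) / ((α : ℂ) + s))) ≠ 0 := by
  intro s hs k
  have hS : pmlMetric σ α s ≠ 0 := pmlMetric_ne_zero hσ hα hs.le
  have hsS : 0 < (s * pmlMetric σ α s).re := hs.trans_le (re_le_re_mul_pmlMetric hσ hα hs.le)
  rw [← pmlMetric, apply_div_eq_of_homogeneous hhom hS]
  exact mul_ne_zero (zpow_ne_zero n (inv_ne_zero hS)) (hF _ hsS k)
end

section
/- Let α > 0, σ > 0 and ξ ∈ ℝ. Every complex root s of the quadratic equation s² + (α + σ - iξ)s - iαξ = 0 satisfies Re(s) ≤ 0; moreover if ξ ≠ 0 then Re(s) < 0. -/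
/-!
Writing the quadratic as `s (s + α + σ) = i ξ (s + α)` and multiplying by `conj (s + α)`, the real
part of the right-hand side vanishes, which leaves
`Re s · (|s + α|² + α σ) = -σ |s|²`.
The weight `|s + α|² + α σ` is positive, so `Re s ≤ 0`, and `Re s = 0` forces `s = 0`, hence `ξ = 0`.
-/

open Complex

namespace PML

variable {α σ ξ : ℝ} {s : ℂ}

theorem re_mul_weight_eq (h : s * (s + α + σ) = I * ξ * (s + α)) :
    s.re * (normSq (s + α) + α * σ) = -(σ * normSq s) := by
  have hre := congrArg re h
  have him := congrArg im h
  simp only [mul_re, mul_im, add_re, add_im, ofReal_re, ofReal_im, I_re, I_im] at hre him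
  simp only [normSq_apply, add_re, add_im, ofReal_re, ofReal_im]
  linear_combination (s.re + α) * hre + s.im * him

theorem re_nonpos (hα : 0 < α) (hσ : 0 < σ) (h : s * (s + α + σ) = I * ξ * (s + α)) :
    s.re ≤ 0 := by
  have hweight : 0 < normSq (s + α) + α * σ :=
    add_pos_of_nonneg_of_pos (normSq_nonneg _) (mul_pos hα hσ)
  have hprod : s.re * (normSq (s + α) + α * σ) ≤ 0 := by
    rw [re_mul_weight_eq h, neg_nonpos]
    exact mul_nonneg hσ.le (normSq_nonneg s)
  exact nonpos_of_mul_nonpos_left hprod hweight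

theorem eq_zero_of_re_eq_zero (hσ : 0 < σ) (h : s * (s + α + σ) = I * ξ * (s + α))
    (hre : s.re = 0) : s = 0 := by
  have hnorm : σ * normSq s = 0 := by
    simpa [hre] using (re_mul_weight_eq h).symm
  exact normSq_eq_zero.mp ((mul_eq_zero.mp hnorm).resolve_left hσ.ne')

end PML

theorem pml_quadratic_roots_stable (α σ : ℝ) (hα : 0 < α) (hσ : 0 < σ) (ξ : ℝ) :
    ∀ s : ℂ, s ^ 2 + ((α : ℂ) + (σ : ℂ) - Complex.I * (ξ : ℂ)) * s
        - Complex.I * (α : ℂ) * (ξ : ℂ) = 0 →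
      s.re ≤ 0 ∧ (ξ ≠ 0 → s.re < 0) := by
  intro s hs
  have h : s * (s + α + σ) = I * ξ * (s + α) := by linear_combination hs
  have hle := PML.re_nonpos hα hσ h
  refine ⟨hle, fun hξ => hle.lt_of_ne fun hre => hξ ?_⟩
  have hIαξ : I * ξ * α = 0 := by
    simpa [PML.eq_zero_of_re_eq_zero hσ h hre] using h.symm
  simpa [I_ne_zero, hα.ne'] using hIαξ
end

section
/- Let σ ≥ 0, α ≥ 0, ξ ∈ ℝ, and suppose s ∈ ℂ satisfies s·(α+s+σ)/(α+s) = iξ with α+s ≠ 0. Then every solution s of this equation with σ > 0 and α ≥ 0 satisfies Re(s) ≤ 0. -/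
theorem pml_dissipation_unified (σ α : ℝ) (hσ : 0 < σ) (hα : 0 ≤ α)
    (ξ : ℝ) (s : ℂ) (hne : (α : ℂ) + s ≠ 0)
    (heq : s * ((α : ℂ) + s + (σ : ℂ)) / ((α : ℂ) + s) = Complex.I * (ξ : ℂ)) :
    s.re ≤ 0 := by
  by_contra h
  push_neg at h
  have h2 : s * ((α : ℂ) + s + (σ : ℂ)) = Complex.I * (ξ : ℂ) * ((α : ℂ) + s) := by
    field_simp at heq
    linear_combination heq
  have hre := congrArg Complex.re h2
  have him := congrArg Complex.im h2
  simp [Complex.mul_re, Complex.mul_im, Complex.add_re, Complex.add_im] at hre him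
  set x := s.re
  set y := s.im
  have key : x*(α+x)*(α+x+σ) + y^2*(x+σ) = 0 := by
    linear_combination (α+x)*hre + y*him
  nlinarith [sq_nonneg y, mul_pos h hσ, key,
    mul_pos (mul_pos h (add_pos_of_nonneg_of_pos hα h)) (add_pos (add_pos_of_nonneg_of_pos hα h) hσ)]
end
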